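/- Negative binomial limit for the externally regulated gene: fix reals a > 0 and δ > 0, and fix n ∈ ℕ. For ν > aδ set b = ν/δ and let P_n(ν) = P_{0,n} + P_{1,n} be the binary-model steady-state protein probability with parameters (a, b, θ = 1, ν). Then P_n(ν) → ((a)_n/n!)·(δ/(1+δ))^n·(1/(1+δ))^a as ν → +∞, i.e. the limiting distribution is the negative binomial distribution with parameters a and δ/(1+δ). -/

import Mathlib

open scoped BigOperators

/-- Pochhammer symbol `(a)ₙ = a(a+1)⋯(a+n−1)`, `(a)₀ = 1`. -/
noncomputable def poch (a : ℝ) (n : ℕ) : ℝ := ∏ k ∈ Finset.range n, (a + k)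

/-- Kummer's confluent hypergeometric function `M(a,b,z)`. -/
noncomputable def kummerM (a b z : ℝ) : ℝ :=
  ∑' k : ℕ, poch a k / poch b k * z ^ k / (Nat.factorial k : ℝ)


open Filter MeasureTheory Set

lemma poch_zero (a : ℝ) : poch a 0 = 1 := Finset.prod_range_zero _
lemma poch_succ (a : ℝ) (n : ℕ) : poch a (n + 1) = poch a n * (a + n) := Finset.prod_range_succ _ _
lemma poch_pos {a : ℝ} (ha : 0 < a) (n : ℕ) : 0 < poch a n := Finset.prod_pos fun k _ => by positivity
lemma poch_le_poch {a b : ℝ} (ha : 0 < a) (hab : a ≤ b) (n : ℕ) : poch a n ≤ poch b n :=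
  Finset.prod_le_prod (fun k _ => by positivity) (fun k _ => by linarith)
lemma poch_shift (a : ℝ) (n : ℕ) : a * poch (1 + a) n = poch a n * (a + n) := by
  induction n with
  | zero => simp [poch_zero]
  | succ n ih => rw [poch_succ, poch_succ, ← mul_assoc, ih]; push_cast; ring


lemma kummer_summable {a b : ℝ} (ha : 0 < a) (hab : a ≤ b) (z : ℝ) :
    Summable (fun k : ℕ => poch a k / poch b k * z ^ k / (Nat.factorial k : ℝ)) := by
  apply Summable.of_norm
  apply Summable.of_nonneg_of_le (fun k => norm_nonneg _)
    (fun k => ?_) (Real.summable_pow_div_factorial |z|)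
  have h1 : 0 < poch a k := poch_pos ha k
  have h2 : poch a k ≤ poch b k := poch_le_poch ha hab k
  have hb : 0 < poch b k := lt_of_lt_of_le h1 h2
  have hfk : (0:ℝ) < (Nat.factorial k : ℝ) := by positivity
  rw [Real.norm_eq_abs, abs_div, abs_mul, abs_div, abs_pow]
  rw [abs_of_pos h1, abs_of_pos hb, abs_of_pos hfk]
  rw [div_le_div_iff_of_pos_right hfk]
  calc poch a k / poch b k * |z| ^ k ≤ 1 * |z| ^ k := by
        gcongr ?_ * _
        exact (div_le_one hb).2 h2
      _ = |z| ^ k := one_mul _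

lemma kummerM_zero (a b : ℝ) : kummerM a b 0 = 1 := by
  rw [kummerM, tsum_eq_single 0]
  · simp [poch_zero]
  · intro k hk; simp [zero_pow hk]

/-- the contiguous combination identity -/
lemma kummer_combo {a b : ℝ} (n : ℕ) (ha : 0 < a) (hab : a < b) (z : ℝ) :
    (b - a) / b * (poch a n / poch (1 + b) n) * kummerM (a + n) (1 + b + n) z
      + a / b * (poch (1 + a) n / poch (1 + b) n) * kummerM (1 + a + n) (1 + b + n) z
    = poch a n / poch b n * kummerM (a + n) (b + n) z := by
  have hn0 : (0:ℝ) ≤ n := Nat.cast_nonneg n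
  have han : (0:ℝ) < a + n := by linarith
  have hbn : (0:ℝ) < b + n := by linarith
  have hS1 : Summable (fun k : ℕ => poch (a + n) k / poch (1 + b + n) k * z ^ k / (Nat.factorial k : ℝ)) :=
    kummer_summable han (by linarith) z
  have hS2 : Summable (fun k : ℕ => poch (1 + a + n) k / poch (1 + b + n) k * z ^ k / (Nat.factorial k : ℝ)) := by
    have : (0:ℝ) < 1 + a + n := by linarith
    exact kummer_summable this (by linarith) z
  rw [kummerM, kummerM, kummerM, ← tsum_mul_left, ← tsum_mul_left, ← tsum_mul_left,
    ← Summable.tsum_add (hS1.mul_left _) (hS2.mul_left _)]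
  apply tsum_congr
  intro k
  -- pointwise algebra
  have e1 : a * poch (1 + a) n = poch a n * (a + n) := poch_shift a n
  have e2 : b * poch (1 + b) n = poch b n * (b + n) := poch_shift b n
  have e3 : (a + n) * poch (1 + (a + n)) k = poch (a + n) k * ((a + n) + k) := poch_shift (a + n) k
  have e4 : (b + n) * poch (1 + (b + n)) k = poch (b + n) k * ((b + n) + k) := poch_shift (b + n) k
  have h1a : (1 : ℝ) + a + n = 1 + (a + n) := by ring
  have h1b : (1 : ℝ) + b + n = 1 + (b + n) := by ring
  rw [h1a, h1b]
  have hpb : poch b n ≠ 0 := ne_of_gt (poch_pos (by linarith) n)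
  have hp1b : poch (1 + b) n ≠ 0 := ne_of_gt (poch_pos (by linarith) n)
  have hpbn : poch (b + n) k ≠ 0 := ne_of_gt (poch_pos hbn k)
  have hp1bn : poch (1 + (b + n)) k ≠ 0 := ne_of_gt (poch_pos (by linarith) k)
  have hfk : (Nat.factorial k : ℝ) ≠ 0 := Nat.cast_ne_zero.2 (Nat.factorial_ne_zero k)
  have hbne : b ≠ 0 := by linarith
  have hane : a ≠ 0 := ne_of_gt ha
  have hanne : a + (n:ℝ) ≠ 0 := ne_of_gt han
  have hbnne : b + (n:ℝ) ≠ 0 := ne_of_gt hbn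
  have hbnk : (b + n : ℝ) + k ≠ 0 := by positivity
  -- express shifted pochhammers
  have f1 : poch (1 + a) n = poch a n * (a + n) / a := by rw [eq_div_iff hane]; linear_combination e1
  have f2 : poch (1 + b) n = poch b n * (b + n) / b := by
    rw [eq_div_iff hbne]; linear_combination e2
  have f3 : poch (1 + (a + n)) k = poch (a + n) k * ((a + n) + k) / (a + n) := by
    rw [eq_div_iff hanne]; linear_combination e3
  have f4 : poch (1 + (b + n)) k = poch (b + n) k * ((b + n) + k) / (b + n) := by
    rw [eq_div_iff hbnne]; linear_combination e4
  rw [f1, f2, f3, f4]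
  field_simp
  ring

lemma Gamma_add_nat (a : ℝ) (ha : 0 < a) (n : ℕ) :
    Real.Gamma (a + n) = poch a n * Real.Gamma a := by
  induction n with
  | zero => simp [poch_zero]
  | succ n ih =>
    have h1 : a + (n + 1 : ℕ) = (a + n) + 1 := by push_cast; ring
    have h2 : (0:ℝ) < a + n := by have : (0:ℝ) ≤ n := Nat.cast_nonneg n; linarith
    rw [h1, Real.Gamma_add_one (ne_of_gt h2), ih, poch_succ]; ring

section Beta

lemma beta_key {x y : ℝ} (t : ℝ) (ht0 : 0 ≤ t) (ht1 : t ≤ 1) :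
    (t:ℂ) ^ ((x:ℂ) - 1) * ((1:ℂ) - (t:ℂ)) ^ ((y:ℂ) - 1)
      = ((t ^ (x-1) * (1-t) ^ (y-1) : ℝ) : ℂ) := by
  have h1 : ((1:ℂ) - (t:ℂ)) = (((1 - t : ℝ)) : ℂ) := by push_cast; ring
  have h2 : ((x:ℂ) - 1) = (((x - 1 : ℝ)) : ℂ) := by push_cast; ring
  have h3 : ((y:ℂ) - 1) = (((y - 1 : ℝ)) : ℂ) := by push_cast; ring
  rw [h1, h2, h3, ← Complex.ofReal_cpow ht0, ← Complex.ofReal_cpow (by linarith),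
    ← Complex.ofReal_mul]

lemma realBeta_integrableOn {x y : ℝ} (hx : 0 < x) (hy : 0 < y) :
    IntegrableOn (fun t : ℝ => t ^ (x-1) * (1-t) ^ (y-1)) (Ioo 0 1) := by
  have hconv := Complex.betaIntegral_convergent (u := (x:ℂ)) (v := (y:ℂ))
    (by simpa using hx) (by simpa using hy)
  have h1 : IntegrableOn (fun t : ℝ => (t:ℂ) ^ ((x:ℂ)-1) * ((1:ℂ)-(t:ℂ)) ^ ((y:ℂ)-1))
      (Ioo 0 1) := (hconv.1).mono_set Ioo_subset_Ioc_self
  have h2 : IntegrableOn (fun t : ℝ => Complex.re ((t:ℂ) ^ ((x:ℂ)-1) * ((1:ℂ)-(t:ℂ)) ^ ((y:ℂ)-1)))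
      (Ioo 0 1) := h1.re
  refine h2.congr_fun (fun t ht => ?_) measurableSet_Ioo
  beta_reduce
  rw [beta_key t ht.1.le ht.2.le]
  simp

lemma realBeta {x y : ℝ} (hx : 0 < x) (hy : 0 < y) :
    ∫ t in Ioo (0:ℝ) 1, t ^ (x-1) * (1-t) ^ (y-1)
      = Real.Gamma x * Real.Gamma y / Real.Gamma (x+y) := by
  have hc := Complex.Gamma_mul_Gamma_eq_betaIntegral (s := (x:ℂ)) (t := (y:ℂ))
    (by simpa using hx) (by simpa using hy)
  have hb : Complex.betaIntegral (x:ℂ) (y:ℂ)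
      = ((∫ t in Ioo (0:ℝ) 1, t ^ (x-1) * (1-t) ^ (y-1) : ℝ) : ℂ) := by
    rw [Complex.betaIntegral]
    rw [intervalIntegral.integral_congr (g := fun t : ℝ => ((t ^ (x-1) * (1-t) ^ (y-1) : ℝ) : ℂ))
      (fun t ht => by
        rw [uIcc_of_le zero_le_one] at ht
        exact beta_key t ht.1 ht.2)]
    rw [intervalIntegral.integral_ofReal, intervalIntegral.integral_of_le zero_le_one,
      MeasureTheory.integral_Ioc_eq_integral_Ioo]
  rw [hb] at hc
  have hxy : ((x:ℂ) + (y:ℂ)) = (((x + y : ℝ)) : ℂ) := by push_cast; ring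
  rw [hxy, Complex.Gamma_ofReal, Complex.Gamma_ofReal, Complex.Gamma_ofReal] at hc
  have hreal : Real.Gamma x * Real.Gamma y
      = Real.Gamma (x+y) * ∫ t in Ioo (0:ℝ) 1, t ^ (x-1) * (1-t) ^ (y-1) := by
    exact_mod_cast hc
  have hne : Real.Gamma (x+y) ≠ 0 := ne_of_gt (Real.Gamma_pos_of_pos (by linarith))
  field_simp
  linarith [hreal]

end Beta

section Rep

lemma beta_ratio {p m : ℝ} (hp : 0 < p) (hm : 0 < m) (k : ℕ) :
    Real.Gamma (p + k) * Real.Gamma m / Real.Gamma ((p + k) + m)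
      = (Real.Gamma p * Real.Gamma m / Real.Gamma (p + m)) * (poch p k / poch (p + m) k) := by
  have h1 : Real.Gamma (p + k) = poch p k * Real.Gamma p := Gamma_add_nat p hp k
  have h2 : (p + k) + m = (p + m) + k := by ring
  have h3 : Real.Gamma ((p + m) + k) = poch (p + m) k * Real.Gamma (p + m) :=
    Gamma_add_nat (p + m) (by linarith) k
  have hg1 : Real.Gamma (p + m) ≠ 0 := ne_of_gt (Real.Gamma_pos_of_pos (by linarith))
  have hg2 : poch (p + m) k ≠ 0 := ne_of_gt (poch_pos (by linarith) k)
  rw [h1, h2, h3]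
  field_simp

lemma kummer_rep {p m ν : ℝ} (hp : 0 < p) (hm : 0 < m) (hν : 0 ≤ ν) :
    kummerM p (p + m) (-ν) * (Real.Gamma p * Real.Gamma m / Real.Gamma (p + m))
      = ∫ t in Ioo (0:ℝ) 1, Real.exp (-(ν * t)) * (t ^ (p-1) * (1-t) ^ (m-1)) := by
  set C : ℝ := Real.Gamma p * Real.Gamma m / Real.Gamma (p + m) with hC
  have hCpos : 0 < C := by
    apply div_pos (mul_pos (Real.Gamma_pos_of_pos hp) (Real.Gamma_pos_of_pos hm))
      (Real.Gamma_pos_of_pos (by linarith))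
  set F : ℕ → ℝ → ℝ := fun k t => ((-(ν * t)) ^ k / (Nat.factorial k : ℝ))
    * (t ^ (p-1) * (1-t) ^ (m-1)) with hF
  -- pointwise sum of F is the exponential integrand
  have hsum : ∀ t : ℝ, ∑' k : ℕ, F k t
      = Real.exp (-(ν * t)) * (t ^ (p-1) * (1-t) ^ (m-1)) := by
    intro t
    rw [hF]
    simp only
    rw [tsum_mul_right]
    congr 1
    rw [Real.exp_eq_exp_ℝ, NormedSpace.exp_eq_tsum_div]
  -- F k agrees on Ioo with a beta integrand
  have hFeq : ∀ k : ℕ, ∀ t ∈ Ioo (0:ℝ) 1, F k t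
      = ((-ν) ^ k / (Nat.factorial k : ℝ)) * (t ^ ((p + k) - 1) * (1-t) ^ (m-1)) := by
    intro k t ht
    have ht0 : (0:ℝ) < t := ht.1
    have : (-(ν * t)) ^ k = (-ν) ^ k * t ^ k := by rw [← neg_mul, mul_pow]
    rw [hF]
    simp only
    rw [this]
    have htk : (t : ℝ) ^ (k : ℕ) = t ^ ((k : ℝ)) := (Real.rpow_natCast t k).symm
    have hadd : t ^ ((p + k) - 1) = t ^ (p - 1) * t ^ ((k:ℝ)) := by
      rw [← Real.rpow_add ht0]; ring_nf
    rw [hadd, htk]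
    ring
  have hBk : ∀ k : ℕ, (0:ℝ) < p + k := fun k => by positivity
  -- integrability of each F k
  have hFint : ∀ k : ℕ, IntegrableOn (F k) (Ioo (0:ℝ) 1) := by
    intro k
    have h1 : IntegrableOn (fun t : ℝ => ((-ν) ^ k / (Nat.factorial k : ℝ))
        * (t ^ ((p + k) - 1) * (1-t) ^ (m-1))) (Ioo (0:ℝ) 1) :=
      (realBeta_integrableOn (hBk k) hm).const_mul ((-ν) ^ k / (Nat.factorial k : ℝ))
    exact h1.congr_fun (fun t ht => (hFeq k t ht).symm) measurableSet_Ioo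
  -- value of ∫ F k
  have hFval : ∀ k : ℕ, ∫ t in Ioo (0:ℝ) 1, F k t
      = ((-ν) ^ k / (Nat.factorial k : ℝ)) * (C * (poch p k / poch (p + m) k)) := by
    intro k
    rw [MeasureTheory.setIntegral_congr_fun measurableSet_Ioo (hFeq k),
      MeasureTheory.integral_const_mul, realBeta (hBk k) hm, beta_ratio hp hm k]
  -- value of ∫ ‖F k‖
  have hFnormval : ∀ k : ℕ, ∫ t in Ioo (0:ℝ) 1, ‖F k t‖
      = (ν ^ k / (Nat.factorial k : ℝ)) * (C * (poch p k / poch (p + m) k)) := by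
    intro k
    have : ∀ t ∈ Ioo (0:ℝ) 1, ‖F k t‖
        = (ν ^ k / (Nat.factorial k : ℝ)) * (t ^ ((p + k) - 1) * (1-t) ^ (m-1)) := by
      intro t ht
      rw [hFeq k t ht]
      have h1 : (0:ℝ) ≤ t ^ ((p + k) - 1) * (1-t) ^ (m-1) := by
        apply mul_nonneg <;> apply Real.rpow_nonneg
        · exact ht.1.le
        · linarith [ht.2]
      rw [Real.norm_eq_abs, abs_mul, abs_of_nonneg h1, abs_div, abs_pow, abs_neg,
        abs_of_nonneg hν, abs_of_nonneg (by positivity : (0:ℝ) ≤ (Nat.factorial k : ℝ))]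
    rw [MeasureTheory.setIntegral_congr_fun measurableSet_Ioo this,
      MeasureTheory.integral_const_mul, realBeta (hBk k) hm, beta_ratio hp hm k]
  -- summability of ∫ ‖F k‖
  have hFsummable : Summable (fun k : ℕ => ∫ t in Ioo (0:ℝ) 1, ‖F k t‖) := by
    apply Summable.of_nonneg_of_le
      (fun k => MeasureTheory.integral_nonneg (fun t => norm_nonneg _))
      (fun k => ?_) ((Real.summable_pow_div_factorial ν).mul_right C)
    rw [hFnormval k, ← mul_assoc]
    have hple : poch p k / poch (p + m) k ≤ 1 :=
      (div_le_one (poch_pos (by linarith) k)).2 (poch_le_poch hp (by linarith) k)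
    calc ν ^ k / (Nat.factorial k : ℝ) * C * (poch p k / poch (p + m) k)
        ≤ ν ^ k / (Nat.factorial k : ℝ) * C * 1 := by
          apply mul_le_mul_of_nonneg_left hple
          apply mul_nonneg _ hCpos.le
          positivity
      _ = ν ^ k / (Nat.factorial k : ℝ) * C := mul_one _
  -- the swap
  have hswap : ∑' k : ℕ, ∫ t in Ioo (0:ℝ) 1, F k t = ∫ t in Ioo (0:ℝ) 1, ∑' k : ℕ, F k t :=
    MeasureTheory.integral_tsum_of_summable_integral_norm hFint hFsummable
  -- conclude
  calc kummerM p (p + m) (-ν) * C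
      = ∑' k : ℕ, (poch p k / poch (p + m) k * (-ν) ^ k / (Nat.factorial k : ℝ)) * C := by
        rw [kummerM, tsum_mul_right]
    _ = ∑' k : ℕ, ∫ t in Ioo (0:ℝ) 1, F k t := by
        apply tsum_congr; intro k
        rw [hFval k]; ring
    _ = ∫ t in Ioo (0:ℝ) 1, ∑' k : ℕ, F k t := hswap
    _ = ∫ t in Ioo (0:ℝ) 1, Real.exp (-(ν * t)) * (t ^ (p-1) * (1-t) ^ (m-1)) := by
        apply MeasureTheory.setIntegral_congr_fun measurableSet_Ioo
        intro t _; exact hsum t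

end Rep

/-- Laplace asymptotics: `ν^p ∫₀¹ e^{-cνt} t^{p-1} (1-t)^{ν/δ-A-1} dt → (c+1/δ)^{-p} Γ(p)`. -/
lemma laplace_asympt {p c A δ : ℝ} (hp : 0 < p) (hc : 0 ≤ c) (hδ : 0 < δ) :
    Tendsto (fun ν : ℝ => ν ^ p *
        ∫ t in Ioo (0:ℝ) 1, Real.exp (-(c * ν * t)) * (t ^ (p-1) * (1-t) ^ ((ν/δ - A) - 1)))
      atTop (nhds ((c + 1/δ) ^ (-p) * Real.Gamma p)) := by
  -- the limit integrand and the approximating family on (0,∞)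
  set g : ℝ → ℝ → ℝ := fun ν s => Real.exp (-(c * s)) * (s ^ (p-1) * (1 - s/ν) ^ ((ν/δ - A) - 1))
    with hg
  set G : ℝ → ℝ → ℝ := fun ν => (Ioo (0:ℝ) ν).indicator (g ν) with hG
  set f : ℝ → ℝ := fun s => Real.exp (-(c * s)) * (s ^ (p-1) * Real.exp (-(s/δ))) with hf
  -- Step 1 : key rescaling identity for ν > 0 large
  have step1 : ∀ᶠ ν : ℝ in atTop,
      ν ^ p * ∫ t in Ioo (0:ℝ) 1, Real.exp (-(c * ν * t)) * (t ^ (p-1) * (1-t) ^ ((ν/δ - A) - 1))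
        = ∫ s in Ioi (0:ℝ), G ν s := by
    filter_upwards [eventually_gt_atTop (0:ℝ)] with ν hν
    have hνne : ν ≠ 0 := ne_of_gt hν
    set M : ℝ := (ν/δ - A) - 1 with hM
    have key : ∫ t in Ioo (0:ℝ) 1, Real.exp (-(c * ν * t)) * (t ^ (p-1) * (1-t) ^ M)
        = ν⁻¹ • ∫ s in (0:ℝ)..ν, Real.exp (-(c * ν * (s/ν))) * ((s/ν) ^ (p-1) * (1-s/ν) ^ M) := by
      rw [intervalIntegral.integral_comp_div
        (fun t => Real.exp (-(c * ν * t)) * (t ^ (p-1) * (1-t) ^ M)) hνne]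
      rw [zero_div, div_self hνne, smul_smul, inv_mul_cancel₀ hνne, one_smul,
        intervalIntegral.integral_of_le zero_le_one, MeasureTheory.integral_Ioc_eq_integral_Ioo]
    rw [key, smul_eq_mul, ← mul_assoc]
    have hνp : ν ^ p * ν⁻¹ = ν ^ (p - 1) := by
      rw [Real.rpow_sub hν, Real.rpow_one, div_eq_mul_inv]
    rw [hνp, intervalIntegral.integral_of_le hν.le, MeasureTheory.integral_Ioc_eq_integral_Ioo,
      ← MeasureTheory.integral_const_mul]
    rw [hG]
    rw [MeasureTheory.setIntegral_indicator measurableSet_Ioo,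
      Set.inter_eq_self_of_subset_right Ioo_subset_Ioi_self]
    apply MeasureTheory.setIntegral_congr_fun measurableSet_Ioo
    intro s hs
    have hs0 : 0 < s := hs.1
    have hsν : s < ν := hs.2
    simp only [hg]
    have h1 : c * ν * (s/ν) = c * s := by
      rw [show c * ν * (s/ν) = c * s * (ν / ν) by ring, div_self hνne, mul_one]
    have h2 : (s/ν) ^ (p-1) = s ^ (p-1) / ν ^ (p-1) :=
      Real.div_rpow hs0.le hν.le _
    have hνp1 : (0:ℝ) < ν ^ (p-1) := Real.rpow_pos_of_pos hν _
    rw [h1, h2]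
    set X : ℝ := (1 - s/ν) ^ M with hX
    set Y : ℝ := s ^ (p-1) with hY
    set Z : ℝ := ν ^ (p-1) with hZ
    field_simp
  -- Step 2 : dominated convergence
  have step2 : Tendsto (fun ν => ∫ s in Ioi (0:ℝ), G ν s) atTop (nhds (∫ s in Ioi (0:ℝ), f s)) := by
    set bound : ℝ → ℝ := fun s => Real.exp (|A + 1|) * (s ^ (p-1) * Real.exp (-(1/δ) * s))
      with hbound
    apply MeasureTheory.tendsto_integral_filter_of_dominated_convergence bound
    · -- measurability
      filter_upwards with ν
      apply AEStronglyMeasurable.indicator _ measurableSet_Ioo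
      apply Measurable.aestronglyMeasurable
      fun_prop
    · -- domination
      filter_upwards [eventually_ge_atTop (δ * (A + 1))] with ν hν
      filter_upwards [MeasureTheory.ae_restrict_mem measurableSet_Ioi] with s hs
      have hs0 : (0:ℝ) < s := hs
      by_cases hmem : s ∈ Ioo (0:ℝ) ν
      · have hsν : s < ν := hmem.2
        have hν0 : 0 < ν := lt_trans hs0 hsν
        have hbase : 0 < 1 - s/ν := by
          rw [sub_pos, div_lt_one hν0]; exact hsν
        have hbase1 : 1 - s/ν ≤ 1 := by
          have : 0 ≤ s/ν := div_nonneg hs0.le hν0.le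
          linarith
        have hMnn : 0 ≤ (ν/δ - A) - 1 := by
          have h1 : A + 1 ≤ ν/δ := (le_div_iff₀ hδ).2 (by linarith [hν])
          linarith
        -- (1-s/ν)^M ≤ exp(-M s/ν) ≤ exp(-s/δ) exp(|A+1|)
        have hkey : (1 - s/ν) ^ ((ν/δ - A) - 1) ≤ Real.exp (-(1/δ) * s + |A + 1|) := by
          have h1 : (1 - s/ν) ^ ((ν/δ - A) - 1)
              ≤ Real.exp (((ν/δ - A) - 1) * (-(s/ν))) := by
            rw [Real.rpow_def_of_pos hbase, Real.exp_le_exp, mul_comm]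
            have := Real.log_le_sub_one_of_pos hbase
            calc ((ν/δ - A) - 1) * Real.log (1 - s/ν)
                ≤ ((ν/δ - A) - 1) * ((1 - s/ν) - 1) :=
                  mul_le_mul_of_nonneg_left (by linarith) hMnn
              _ = ((ν/δ - A) - 1) * (-(s/ν)) := by ring
          refine h1.trans (Real.exp_le_exp.2 ?_)
          have hsν' : s / ν ≤ 1 := (div_le_one hν0).2 hsν.le
          have hsν'' : 0 ≤ s / ν := div_nonneg hs0.le hν0.le
          have expand : ((ν/δ - A) - 1) * (-(s/ν)) = -(1/δ) * s + (A + 1) * (s/ν) := by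
            field_simp
            ring
          rw [expand]
          have : (A + 1) * (s/ν) ≤ |A + 1| := by
            calc (A + 1) * (s/ν) ≤ |A + 1| * (s/ν) := by
                  apply mul_le_mul_of_nonneg_right (le_abs_self _) hsν''
              _ ≤ |A + 1| * 1 := by
                  apply mul_le_mul_of_nonneg_left hsν' (abs_nonneg _)
              _ = |A + 1| := mul_one _
          linarith
        have hval : G ν s = Real.exp (-(c * s)) * (s ^ (p-1) * (1 - s/ν) ^ ((ν/δ - A) - 1)) := by
          simp only [hG, hg, Set.indicator_of_mem hmem]
        rw [hval]
        have hnn : 0 ≤ Real.exp (-(c * s)) * (s ^ (p-1) * (1 - s/ν) ^ ((ν/δ - A) - 1)) := by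
          apply mul_nonneg (Real.exp_nonneg _)
          exact mul_nonneg (Real.rpow_nonneg hs0.le _) (Real.rpow_nonneg hbase.le _)
        rw [Real.norm_eq_abs, abs_of_nonneg hnn, hbound]
        have hec : Real.exp (-(c * s)) ≤ 1 := by
          rw [Real.exp_le_one_iff]
          have : 0 ≤ c * s := mul_nonneg hc hs0.le
          linarith
        calc Real.exp (-(c * s)) * (s ^ (p-1) * (1 - s/ν) ^ ((ν/δ - A) - 1))
            ≤ 1 * (s ^ (p-1) * (1 - s/ν) ^ ((ν/δ - A) - 1)) := by
              apply mul_le_mul_of_nonneg_right hec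
              exact mul_nonneg (Real.rpow_nonneg hs0.le _) (Real.rpow_nonneg hbase.le _)
          _ = s ^ (p-1) * (1 - s/ν) ^ ((ν/δ - A) - 1) := one_mul _
          _ ≤ s ^ (p-1) * Real.exp (-(1/δ) * s + |A + 1|) := by
              apply mul_le_mul_of_nonneg_left hkey (Real.rpow_nonneg hs0.le _)
          _ = Real.exp (|A + 1|) * (s ^ (p-1) * Real.exp (-(1/δ) * s)) := by
              rw [Real.exp_add]; ring
      · have hval : G ν s = 0 := by
          simp only [hG, Set.indicator_of_notMem hmem]
        rw [hval, norm_zero, hbound]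
        positivity
    · -- integrability of the bound
      rw [hbound]
      apply MeasureTheory.Integrable.const_mul
      have h1 : IntegrableOn (fun s : ℝ => s ^ (p-1) * Real.exp (-(1/δ) * s ^ (1:ℝ))) (Ioi 0) :=
        integrableOn_rpow_mul_exp_neg_mul_rpow (by linarith) zero_lt_one (by positivity)
      apply h1.congr_fun (fun s hs => ?_) measurableSet_Ioi
      rw [Real.rpow_one]
    · -- a.e. pointwise convergence
      filter_upwards [MeasureTheory.ae_restrict_mem measurableSet_Ioi] with s hs
      have hs0 : (0:ℝ) < s := hs
      have hev : ∀ᶠ ν : ℝ in atTop, G ν s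
          = Real.exp (-(c * s)) * (s ^ (p-1) *
            Real.exp (((ν/δ - A) - 1) * Real.log (1 + (-s)/ν))) := by
        filter_upwards [eventually_gt_atTop s, eventually_gt_atTop (0:ℝ)] with ν hνs hν0
        have hbase : 0 < 1 - s/ν := by
          rw [sub_pos, div_lt_one hν0]; exact hνs
        have hmem : s ∈ Ioo (0:ℝ) ν := ⟨hs0, hνs⟩
        simp only [hG, hg, Set.indicator_of_mem hmem]
        congr 1
        congr 1
        rw [Real.rpow_def_of_pos hbase]
        rw [mul_comm (Real.log _)]
        congr 2
        rw [neg_div, ← sub_eq_add_neg]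
      simp only [hf]
      apply Tendsto.congr' (hev.mono fun ν h => h.symm)
      have hlog : Tendsto (fun ν : ℝ => Real.log (1 + (-s)/ν)) atTop (nhds 0) := by
        have h1 := Real.tendsto_mul_log_one_add_div_atTop (-s)
        have h2 : Tendsto (fun ν : ℝ => ν⁻¹) atTop (nhds 0) := tendsto_inv_atTop_zero
        have h3 := h1.mul h2
        rw [mul_zero] at h3
        apply h3.congr'
        filter_upwards [eventually_gt_atTop (0:ℝ)] with ν hν
        field_simp
      have hexp : Tendsto (fun ν : ℝ => ((ν/δ - A) - 1) * Real.log (1 + (-s)/ν))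
          atTop (nhds (-(s/δ))) := by
        have e1 : Tendsto (fun ν : ℝ => (1/δ) * (ν * Real.log (1 + (-s)/ν)))
            atTop (nhds ((1/δ) * (-s))) :=
          (Real.tendsto_mul_log_one_add_div_atTop (-s)).const_mul _
        have e2 : Tendsto (fun ν : ℝ => (A + 1) * Real.log (1 + (-s)/ν))
            atTop (nhds ((A + 1) * 0)) := hlog.const_mul _
        have e3 := e1.sub e2
        have : (1/δ) * (-s) - (A + 1) * 0 = -(s/δ) := by ring
        rw [this] at e3
        apply e3.congr
        intro ν
        ring
      have := ((Real.continuous_exp.tendsto _).comp hexp).const_mul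
        (Real.exp (-(c * s)) * s ^ (p-1))
      simp only [Function.comp] at this
      have h4 : Real.exp (-(c * s)) * s ^ (p-1) * Real.exp (-(s/δ))
          = Real.exp (-(c * s)) * (s ^ (p-1) * Real.exp (-(s/δ))) := by ring
      rw [h4] at this
      exact this.congr (fun ν => by ring)
  -- Step 3 : value of the limit integral
  have step3 : ∫ s in Ioi (0:ℝ), f s = (c + 1/δ) ^ (-p) * Real.Gamma p := by
    rw [hf]
    have hcongr : ∀ s ∈ Ioi (0:ℝ),
        Real.exp (-(c * s)) * (s ^ (p-1) * Real.exp (-(s/δ)))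
          = s ^ (p-1) * Real.exp (-(c + 1/δ) * s ^ (1:ℝ)) := by
      intro s hs
      have he : Real.exp (-(c * s)) * Real.exp (-(s/δ)) = Real.exp (-(c + 1/δ) * s) := by
        rw [← Real.exp_add]
        congr 1
        field_simp
        ring
      rw [Real.rpow_one, ← he]
      ring
    rw [MeasureTheory.setIntegral_congr_fun measurableSet_Ioi hcongr]
    rw [integral_rpow_mul_exp_neg_mul_rpow one_pos (by linarith) (by positivity)]
    rw [sub_add_cancel]
    norm_num
  rw [← step3]
  exact step2.congr' (by filter_upwards [step1] with ν h using h.symm)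

/-- the central limit: `M(p, p + (ν/δ - A), -ν) → (1+δ)^{-p}`. -/
lemma kummer_limit {p A δ : ℝ} (hp : 0 < p) (hδ : 0 < δ) :
    Tendsto (fun ν : ℝ => kummerM p (p + (ν/δ - A)) (-ν)) atTop (nhds ((1+δ) ^ (-p))) := by
  have hδ' : (0:ℝ) < 1/δ := by positivity
  set C1 : ℝ := (1 + 1/δ) ^ (-p) * Real.Gamma p with hC1
  set C0 : ℝ := (0 + 1/δ) ^ (-p) * Real.Gamma p with hC0
  have hC0pos : 0 < C0 := by
    rw [hC0]
    exact mul_pos (Real.rpow_pos_of_pos (by linarith) _) (Real.Gamma_pos_of_pos hp)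
  set I : ℝ → ℝ → ℝ := fun c ν =>
    ∫ t in Ioo (0:ℝ) 1, Real.exp (-(c * ν * t)) * (t ^ (p-1) * (1-t) ^ ((ν/δ - A) - 1)) with hI
  have h1 : Tendsto (fun ν : ℝ => ν ^ p * I 1 ν) atTop (nhds C1) :=
    laplace_asympt hp zero_le_one hδ
  have h0 : Tendsto (fun ν : ℝ => ν ^ p * I 0 ν) atTop (nhds C0) :=
    laplace_asympt hp le_rfl hδ
  have hratio := h1.div h0 (ne_of_gt hC0pos)
  have hval : C1 / C0 = (1+δ) ^ (-p) := by
    rw [hC1, hC0, mul_div_mul_right _ _ (ne_of_gt (Real.Gamma_pos_of_pos hp)), zero_add,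
      ← Real.div_rpow (by linarith) hδ'.le]
    congr 1
    rw [div_div_eq_mul_div, div_one]
    field_simp
    ring
  rw [hval] at hratio
  -- eventually the ratio equals kummerM
  have hI0pos : ∀ᶠ ν : ℝ in atTop, 0 < ν ^ p * I 0 ν :=
    h0.eventually (eventually_gt_nhds hC0pos)
  apply hratio.congr'
  filter_upwards [hI0pos, eventually_gt_atTop (0:ℝ), eventually_gt_atTop (δ * A)]
    with ν hp0 hν hνA
  have hm : 0 < ν/δ - A := by
    rw [sub_pos, lt_div_iff₀ hδ]; linarith
  have hνppos : 0 < ν ^ p := Real.rpow_pos_of_pos hν _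
  have hI0 : 0 < I 0 ν := by
    by_contra h
    push_neg at h
    nlinarith [hp0]
  -- representation for the numerator
  have hrep1 : kummerM p (p + (ν/δ - A)) (-ν) * (Real.Gamma p * Real.Gamma (ν/δ - A)
      / Real.Gamma (p + (ν/δ - A))) = I 1 ν := by
    rw [kummer_rep hp hm hν.le, hI]
    apply MeasureTheory.setIntegral_congr_fun measurableSet_Ioo
    intro t _
    simp only [one_mul]
  -- the Beta constant equals `I 0 ν`
  have hrep0 : (Real.Gamma p * Real.Gamma (ν/δ - A) / Real.Gamma (p + (ν/δ - A))) = I 0 ν := by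
    have h := kummer_rep hp hm (le_refl (0:ℝ))
    rw [neg_zero, kummerM_zero, one_mul] at h
    rw [h, hI]
    apply MeasureTheory.setIntegral_congr_fun measurableSet_Ioo
    intro t _
    simp only [zero_mul]
  rw [hrep0] at hrep1
  have : kummerM p (p + (ν/δ - A)) (-ν) = I 1 ν / I 0 ν := by
    rw [← hrep1, mul_div_assoc, div_self (ne_of_gt hI0), mul_one]
  simp only [Pi.div_apply]
  rw [this, mul_div_mul_left _ _ (ne_of_gt hνppos)]

/-- Steady-state probability `P_{0,n}` of the binary gene model. -/
noncomputable def P0 (a b ν θ : ℝ) (n : ℕ) : ℝ :=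
  (b - a) / (kummerM a b (ν * (1 - θ)) * b) * (ν ^ n / (Nat.factorial n : ℝ)) *
    (poch a n / poch (1 + b) n) * kummerM (a + n) (1 + b + n) (-(ν * θ))

/-- Steady-state probability `P_{1,n}` of the binary gene model. -/
noncomputable def P1 (a b ν θ : ℝ) (n : ℕ) : ℝ :=
  a / (kummerM a b (ν * (1 - θ)) * b) * (ν ^ n / (Nat.factorial n : ℝ)) *
    (poch (1 + a) n / poch (1 + b) n) * kummerM (1 + a + n) (1 + b + n) (-(ν * θ))


/-- Negative binomial limit for the externally regulated gene. -/
theorem negative_binomial_limit_external (a δ : ℝ) (ha : 0 < a) (hδ : 0 < δ)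
    (n : ℕ) :
    Filter.Tendsto (fun ν : ℝ => P0 a (ν / δ) ν 1 n + P1 a (ν / δ) ν 1 n)
      Filter.atTop
      (nhds (poch a n / (Nat.factorial n : ℝ) * (δ / (1 + δ)) ^ n *
        (1 / (1 + δ)) ^ a)) := by
  have h1δ : (0:ℝ) < 1 + δ := by linarith
  have hn0 : (0:ℝ) ≤ n := Nat.cast_nonneg n
  have hpn : (0:ℝ) < a + n := by linarith
  -- the kummer factor limit
  have T2 : Tendsto (fun ν : ℝ => kummerM (a + n) (ν/δ + n) (-ν)) atTop
      (nhds ((1+δ) ^ (-(a + (n:ℝ))))) := by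
    have h := kummer_limit (p := a + (n:ℝ)) (A := a) hpn hδ
    apply h.congr
    intro ν
    congr 1
    ring
  -- the power/pochhammer factor limit
  have T1 : Tendsto (fun ν : ℝ => ν ^ n / poch (ν/δ) n) atTop (nhds (δ ^ n)) := by
    have hfac : ∀ k : ℕ, Tendsto (fun ν : ℝ => ν / (ν/δ + k)) atTop (nhds δ) := by
      intro k
      have h2 : Tendsto (fun ν : ℝ => (k:ℝ)/ν) atTop (nhds 0) :=
        tendsto_const_nhds.div_atTop tendsto_id
      have hd : Tendsto (fun ν : ℝ => 1/δ + (k:ℝ)/ν) atTop (nhds (1/δ + 0)) :=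
        tendsto_const_nhds.add h2
      rw [add_zero] at hd
      have hi := hd.inv₀ (by positivity)
      rw [one_div, inv_inv] at hi
      apply hi.congr'
      filter_upwards [eventually_gt_atTop (0:ℝ)] with ν hν
      have hνδk : 0 < ν/δ + k := by positivity
      field_simp
    have hprod := tendsto_finset_prod (Finset.range n)
      (f := fun (k : ℕ) (ν : ℝ) => ν / (ν/δ + k)) (fun k _ => hfac k)
    rw [Finset.prod_const, Finset.card_range] at hprod
    apply hprod.congr'
    filter_upwards [eventually_gt_atTop (0:ℝ)] with ν hν
    rw [Finset.prod_div_distrib, Finset.prod_const, Finset.card_range, poch]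
  have Tmain := (tendsto_const_nhds (x := poch a n / (Nat.factorial n : ℝ))
    (f := atTop (α := ℝ))).mul T1 |>.mul T2
  -- rewrite the target constant
  have hconst : poch a n / (Nat.factorial n : ℝ) * (δ / (1 + δ)) ^ n * (1 / (1 + δ)) ^ a
      = poch a n / (Nat.factorial n : ℝ) * δ ^ n * (1+δ) ^ (-(a + (n:ℝ))) := by
    have e1 : ((1:ℝ) / (1 + δ)) ^ a = (1+δ) ^ (-a) := by
      rw [one_div, Real.inv_rpow h1δ.le, ← Real.rpow_neg h1δ.le]
    have e3 : ((1:ℝ)+δ) ^ (-(a + (n:ℝ))) = (1+δ) ^ (-a) * ((1+δ) ^ n)⁻¹ := by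
      rw [show -(a + (n:ℝ)) = -a + -(n:ℝ) by ring, Real.rpow_add h1δ,
        Real.rpow_neg h1δ.le (n:ℝ), Real.rpow_natCast]
    rw [e1, e3, div_pow]
    ring
  rw [hconst]
  apply Tmain.congr'
  filter_upwards [eventually_gt_atTop (0:ℝ), eventually_gt_atTop (δ * a)] with ν hν hνa
  have hb : a < ν/δ := by rw [lt_div_iff₀ hδ]; linarith
  have hb0 : (0:ℝ) < ν/δ := lt_trans ha hb
  have hcombo := kummer_combo (a := a) (b := ν/δ) n ha hb (-ν)
  simp only [P0, P1]
  rw [show ν * (1 - 1) = 0 by ring, kummerM_zero, one_mul, mul_one]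
  linear_combination (-(ν ^ n / (Nat.factorial n : ℝ))) * hcombo
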